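/- arXiv:1112.0695 — 4 statements merged into one kernel-verified Lean document; each statement's English description precedes it below -/
import Mathlib

section
/- There exists a universal constant C > 0 such that the following holds for every integer m ≥ 1. Let p₁, …, p_m be independent random points, each uniformly distributed on the unit square [0,1]² ⊆ ℝ² (with the Euclidean metric), and let S = {p₁, …, p_m}. Let □ ⊆ [0,1]² be any axis-parallel square of side length 1/√m. Then the expected number of indices i ∈ {1, …, m} such that the Voronoi cell of p_i with respect to S intersects □ is at most C. -/
/-! If the Voronoi cell of `pᵢ` meets the square with corner `c` and side `s = 1/√m`, then
`d(pᵢ, c) ≤ d(pⱼ, c) + 4s` for every `j`. With `k = ⌊(d(pᵢ, c) - 4s)/s⌋`, this puts `pᵢ` in the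
ball of radius `(k + 5)s` around `c` while every other point avoids the ball of radius `ks`, or
else every other point is at distance at least `1` from `c`. A ball of radius `t ≤ 1` centred in
`[0,1]²` covers area at least `t²/16` of it, so by independence the first event has probability
at most `π (k + 5)² s² (1 - k²s²/16)^(m-1) = O((k + 5)² e^{-k²/16} / m)` and the second at most
`(15/16)^(m-1)`. Summing over `k` and over the `m` sites gives a bound independent of `m`. -/

open MeasureTheory ProbabilityTheory
open scoped ENNReal NNReal

noncomputable section

/-- The unit square `[0,1]² ⊆ ℝ²` (with the Euclidean metric). -/
def unitSquare : Set (EuclideanSpace ℝ (Fin 2)) := {x | ∀ i, x i ∈ Set.Icc (0 : ℝ) 1}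

/-- The axis-parallel square with south-west corner `c` and side length `s`. -/
def axisSquare (c : EuclideanSpace ℝ (Fin 2)) (s : ℝ) : Set (EuclideanSpace ℝ (Fin 2)) :=
  {x | ∀ i, x i ∈ Set.Icc (c i) (c i + s)}

/-- The Voronoi cell of `p` with respect to the finite set of sites `P`
in a metric space. -/
def vorCell {X : Type*} [MetricSpace X] (P : Finset X) (p : X) : Set X :=
  {x | ∀ q ∈ P, dist x p ≤ dist x q}

open Metric Real

theorem dist_le_dist_add_of_vorCell_inter_nonempty {X : Type*} [MetricSpace X] {P : Finset X}
    {p q z : X} {Q : Set X} {r : ℝ} (hQ : Q ⊆ closedBall z r) (hne : (vorCell P p ∩ Q).Nonempty)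
    (hq : q ∈ P) : dist p z ≤ dist q z + 2 * r := by
  obtain ⟨x, hxp, hxQ⟩ := hne
  have hxz : dist x z ≤ r := hQ hxQ
  calc dist p z ≤ dist x p + dist x z := dist_triangle_left p z x
    _ ≤ dist x q + dist x z := by gcongr; exact hxp q hq
    _ ≤ dist q z + 2 * r := by linarith [dist_triangle_right x q z]

theorem unitSquare_eq_axisSquare : unitSquare = axisSquare 0 1 := by
  ext x; simp [unitSquare, axisSquare]

theorem volume_axisSquare (c : EuclideanSpace ℝ (Fin 2)) {s : ℝ} (hs : 0 ≤ s) :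
    volume (axisSquare c s) = ENNReal.ofReal (s ^ 2) := by
  have h : axisSquare c s = (MeasurableEquiv.toLp 2 (Fin 2 → ℝ)).symm ⁻¹'
      Set.univ.pi fun i => Set.Icc (c i) (c i + s) := by
    ext x; simp only [axisSquare, Set.mem_preimage, Set.mem_univ_pi, Set.mem_ofPred_eq]; rfl
  rw [h, (EuclideanSpace.volume_preserving_symm_measurableEquiv_toLp (Fin 2)).measure_preimage
    (MeasurableSet.univ_pi fun i => measurableSet_Icc).nullMeasurableSet, volume_pi_pi]
  simp [Real.volume_Icc, ← ENNReal.ofReal_mul hs, sq]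

theorem volume_unitSquare : volume unitSquare = 1 := by
  simp [unitSquare_eq_axisSquare, volume_axisSquare]

theorem dist_le_of_mem_axisSquare {c x y : EuclideanSpace ℝ (Fin 2)} {s : ℝ}
    (hx : x ∈ axisSquare c s) (hy : y ∈ axisSquare c s) : dist x y ≤ 2 * s := by
  have hcoord : ∀ i, (x i - y i) ^ 2 ≤ s ^ 2 := fun i =>
    sq_le_sq' (by linarith [(hx i).1, (hy i).2]) (by linarith [(hx i).2, (hy i).1])
  have hs : 0 ≤ s := by linarith [(hx 0).1, (hx 0).2]
  rw [EuclideanSpace.dist_eq, Real.sqrt_le_left (by positivity), Fin.sum_univ_two,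
    Real.dist_eq, Real.dist_eq, sq_abs, sq_abs]
  nlinarith [hcoord 0, hcoord 1]

theorem axisSquare_subset_closedBall (c : EuclideanSpace ℝ (Fin 2)) {s : ℝ} (hs : 0 ≤ s) :
    axisSquare c s ⊆ closedBall c (2 * s) := fun _ hx =>
  dist_le_of_mem_axisSquare hx fun i => ⟨le_rfl, by linarith⟩

theorem ofReal_le_volume_ball_inter_unitSquare {z : EuclideanSpace ℝ (Fin 2)}
    (hz : z ∈ unitSquare) {t : ℝ} (ht0 : 0 ≤ t) (ht1 : t ≤ 1) :
    ENNReal.ofReal (t ^ 2 / 16) ≤ volume (ball z t ∩ unitSquare) := by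
  rcases ht0.eq_or_lt with rfl | ht0
  · simp
  set u : EuclideanSpace ℝ (Fin 2) := WithLp.toLp 2 fun i => min (z i) (1 - t / 4)
  have hzu : z ∈ axisSquare u (t / 4) := fun i => by
    simp only [u]
    constructor
    · exact min_le_left _ _
    · rcases min_choice (z i) (1 - t / 4) with h | h <;> rw [h] <;> linarith [(hz i).2]
  have hu : axisSquare u (t / 4) ⊆ ball z t ∩ unitSquare := fun x hx => by
    refine ⟨?_, fun i => ?_⟩
    · rw [mem_ball]
      linarith [dist_le_of_mem_axisSquare hx hzu]
    · have hxi := hx i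
      simp only [u] at hxi
      constructor
      · linarith [le_min (hz i).1 (by linarith : (0 : ℝ) ≤ 1 - t / 4), hxi.1]
      · linarith [min_le_right (z i) (1 - t / 4), hxi.2]
  calc ENNReal.ofReal (t ^ 2 / 16) = volume (axisSquare u (t / 4)) := by
        rw [volume_axisSquare u (by positivity)]; ring_nf
    _ ≤ volume (ball z t ∩ unitSquare) := measure_mono hu

theorem exists_shell {ι : Type*} (d : ι → ℝ) (hd : ∀ j, 0 ≤ d j) {i : ι} {r s : ℝ} (hs : 0 < s)
    (h : ∀ j, d i ≤ d j + r) (R : ℝ) :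
    (∀ j, R ≤ d j) ∨ ∃ k : ℕ, k * s < R ∧ d i ≤ (k + 1) * s + r ∧ ∀ j, k * s ≤ d j := by
  set k := ⌊(d i - r) / s⌋₊
  have hk_le : ∀ j, k * s ≤ d j := fun j => by
    rcases le_or_gt 0 ((d i - r) / s) with h0 | h0
    · have := (le_div_iff₀ hs).1 (Nat.floor_le h0)
      linarith [h j]
    · simp [k, Nat.floor_of_nonpos h0.le, hd j]
  have hi : d i ≤ (k + 1) * s + r := by
    linarith [(div_lt_iff₀ hs).1 (Nat.lt_floor_add_one ((d i - r) / s))]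
  by_cases hR : R ≤ k * s
  · exact .inl fun j => hR.trans (hk_le j)
  · exact .inr ⟨k, not_le.1 hR, hi, hk_le⟩

section IID

variable {Ω E ι : Type*} [MeasurableSpace Ω] [MeasurableSpace E] {μ : Measure Ω}
  [Fintype ι] [DecidableEq ι] {p : ι → Ω → E} {ν : Measure E}

theorem measure_preimage_inter_iInter_preimage_eq (hp : ∀ i, Measurable (p i))
    (hindep : iIndepFun p μ) (hlaw : ∀ i, μ.map (p i) = ν) (i : ι) {D₁ D₂ : Set E}
    (hD₁ : MeasurableSet D₁) (hD₂ : MeasurableSet D₂) :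
    μ (p i ⁻¹' D₁ ∩ ⋂ j ∈ Finset.univ.erase i, p j ⁻¹' D₂)
      = ν D₁ * ν D₂ ^ (Fintype.card ι - 1) := by
  set D : ι → Set E := Function.update (fun _ => D₂) i D₁
  have hevent : p i ⁻¹' D₁ ∩ ⋂ j ∈ Finset.univ.erase i, p j ⁻¹' D₂
      = ⋂ j ∈ Finset.univ, p j ⁻¹' D j := by
    ext ω
    simp only [Set.mem_inter_iff, Set.mem_iInter, Set.mem_preimage, Finset.mem_erase,
      Finset.mem_univ, and_true, forall_const, D]
    refine ⟨fun ⟨hi, hj⟩ j => ?_,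
      fun h => ⟨by simpa using h i, fun j hj => by simpa [hj] using h j⟩⟩
    by_cases hji : j = i
    · subst hji; simpa using hi
    · simpa [hji] using hj j hji
  have hD : ∀ j, MeasurableSet (D j) := fun j => by
    by_cases hji : j = i
    · subst hji; simpa [D] using hD₁
    · simpa [D, hji] using hD₂
  rw [hevent, hindep.measure_inter_preimage_eq_mul _ fun j _ => hD j]
  have hmap : ∀ j, μ (p j ⁻¹' D j) = ν (D j) := fun j => by
    rw [← hlaw j, Measure.map_apply (hp j) (hD j)]
  simp_rw [hmap, D, Function.apply_update (fun _ => ν)]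
  rw [Finset.prod_update_of_mem (Finset.mem_univ i), ← Finset.compl_eq_univ_sdiff,
    Finset.prod_const, Finset.card_compl, Finset.card_singleton]

theorem measure_le_sum_shells [PseudoMetricSpace E] [OpensMeasurableSpace E]
    [IsProbabilityMeasure μ] (hp : ∀ i, Measurable (p i)) (hindep : iIndepFun p μ)
    (hlaw : ∀ i, μ.map (p i) = ν) (i : ι) (z : E) {r s R : ℝ} (hs : 0 < s) {K : ℕ}
    (hK : R ≤ K * s) :
    μ {ω | ∀ j, dist (p i ω) z ≤ dist (p j ω) z + r}
      ≤ ∑ k ∈ Finset.range K,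
          ν (closedBall z ((k + 1) * s + r)) * ν (ball z (k * s))ᶜ ^ (Fintype.card ι - 1)
        + ν (ball z R)ᶜ ^ (Fintype.card ι - 1) := by
  have : IsProbabilityMeasure ν := hlaw i ▸ Measure.isProbabilityMeasure_map (hp i).aemeasurable
  set shell : ℕ → Set Ω := fun k => p i ⁻¹' closedBall z ((k + 1) * s + r) ∩
    ⋂ j ∈ Finset.univ.erase i, p j ⁻¹' (ball z (k * s))ᶜ
  set far : Set Ω := p i ⁻¹' Set.univ ∩ ⋂ j ∈ Finset.univ.erase i, p j ⁻¹' (ball z R)ᶜ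
  have hcover : {ω | ∀ j, dist (p i ω) z ≤ dist (p j ω) z + r}
      ⊆ (⋃ k ∈ Finset.range K, shell k) ∪ far := fun ω hω => by
    rcases exists_shell (fun j => dist (p j ω) z) (fun _ => dist_nonneg) hs hω R with
      hfar | ⟨k, hkR, hi, hj⟩
    · exact .inr ⟨trivial, Set.mem_iInter₂.2 fun j _ => not_lt.2 (hfar j)⟩
    · have hkK : k < K := by exact_mod_cast (mul_lt_mul_iff_left₀ hs).1 (hkR.trans_le hK)
      exact .inl (Set.mem_biUnion (Finset.mem_range.2 hkK)
        ⟨hi, Set.mem_iInter₂.2 fun j _ => not_lt.2 (hj j)⟩)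
  calc μ {ω | ∀ j, dist (p i ω) z ≤ dist (p j ω) z + r}
      ≤ μ ((⋃ k ∈ Finset.range K, shell k) ∪ far) := measure_mono hcover
    _ ≤ ∑ k ∈ Finset.range K, μ (shell k) + μ far :=
        (measure_union_le _ _).trans (add_le_add_left (measure_biUnion_finset_le _ _) _)
    _ = _ := by
        simp only [shell, far, measure_preimage_inter_iInter_preimage_eq hp hindep hlaw i
          measurableSet_closedBall measurableSet_ball.compl,
          measure_preimage_inter_iInter_preimage_eq hp hindep hlaw i
          MeasurableSet.univ measurableSet_ball.compl, measure_univ, one_mul]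

end IID

theorem lintegral_card_filter_mem {Ω ι : Type*} [MeasurableSpace Ω] (μ : Measure Ω) [Fintype ι]
    {E : ι → Set Ω} [∀ ω i, Decidable (ω ∈ E i)] (hE : ∀ i, MeasurableSet (E i)) :
    ∫⁻ ω, ((Finset.univ.filter fun i => ω ∈ E i).card : ℝ≥0∞) ∂μ = ∑ i, μ (E i) := by
  have hcard : ∀ ω, ((Finset.univ.filter fun i => ω ∈ E i).card : ℝ≥0∞)
      = ∑ i, (E i).indicator 1 ω := fun ω => by
    rw [Finset.card_filter]
    push_cast
    simp [Set.indicator_apply]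
  simp_rw [hcard]
  rw [lintegral_finsetSum _ fun i _ => measurable_one.indicator (hE i)]
  simp_rw [lintegral_indicator_one (hE _)]

theorem one_sub_pow_pred_le_two_mul_exp {x : ℝ} (hx : x ≤ 1 / 2) {m : ℕ}
    (hm : 1 ≤ m) : (1 - x) ^ (m - 1) ≤ 2 * exp (-(m * x)) := by
  have hpow : (1 - x) ^ m ≤ exp (-(m * x)) := calc
    (1 - x) ^ m ≤ exp (-x) ^ m := pow_le_pow_left₀ (by linarith) (one_sub_le_exp_neg x) m
    _ = exp (-(m * x)) := by rw [← Real.exp_nat_mul]; ring_nf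
  have hsucc : (1 - x) ^ m = (1 - x) ^ (m - 1) * (1 - x) := by
    rw [← pow_succ, Nat.sub_add_cancel hm]
  nlinarith [pow_nonneg (by linarith : (0 : ℝ) ≤ 1 - x) (m - 1)]

theorem exp_neg_le_two_div_one_add_sq {y : ℝ} (hy : 0 ≤ y) : exp (-y) ≤ 2 / (1 + y) ^ 2 := by
  rw [Real.exp_neg, ← one_div, div_le_div_iff₀ (exp_pos y) (by positivity)]
  nlinarith [quadratic_le_exp_of_nonneg hy]

theorem sum_range_inv_succ_sq_le (n : ℕ) : ∑ k ∈ Finset.range n, 1 / ((k : ℝ) + 1) ^ 2 ≤ 2 := by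
  have h := sum_Ioo_inv_sq_le (α := ℝ) 0 (n + 1)
  rw [← Finset.Ico_add_one_left_eq_Ioo, Finset.sum_Ico_eq_sum_range] at h
  simpa [add_comm] using h

theorem restrict_unitSquare_closedBall_le (z : EuclideanSpace ℝ (Fin 2)) {ρ : ℝ} (hρ : 0 ≤ ρ) :
    volume.restrict unitSquare (closedBall z ρ) ≤ ENNReal.ofReal (π * ρ ^ 2) := by
  refine (Measure.restrict_le_self _).trans_eq ?_
  rw [EuclideanSpace.volume_closedBall_fin_two, ← ENNReal.ofReal_pow hρ,
    ← ENNReal.ofReal_mul (by positivity), mul_comm]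

instance isProbabilityMeasure_restrict_unitSquare :
    IsProbabilityMeasure (volume.restrict unitSquare) :=
  ⟨by rw [Measure.restrict_apply_univ, volume_unitSquare]⟩

theorem restrict_unitSquare_compl_ball_le {z : EuclideanSpace ℝ (Fin 2)} (hz : z ∈ unitSquare)
    {t : ℝ} (ht0 : 0 ≤ t) (ht1 : t ≤ 1) :
    volume.restrict unitSquare (ball z t)ᶜ ≤ ENNReal.ofReal (1 - t ^ 2 / 16) := by
  rw [prob_compl_eq_one_sub measurableSet_ball, Measure.restrict_apply measurableSet_ball,
    ENNReal.ofReal_sub _ (by positivity), ENNReal.ofReal_one]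
  exact tsub_le_tsub_left (ofReal_le_volume_ball_inter_unitSquare hz ht0 ht1) 1

/-- The right-hand side of `measure_le_sum_shells` for `s = 1/√m`, `r = 4s`, `R = 1`,
`K = ⌊√m⌋ + 1`, with each ball measure replaced by its bound in the unit square. -/
def shellBound (m : ℕ) : ℝ :=
  ∑ k ∈ Finset.range (Nat.sqrt m + 1),
      π * ((k + 5) / √m) ^ 2 * (1 - (k / √m) ^ 2 / 16) ^ (m - 1)
    + (1 - 1 / 16) ^ (m - 1)

theorem div_sqrt_le_one_of_le_sqrt {m k : ℕ} (hk : k ≤ Nat.sqrt m) : (k : ℝ) / √m ≤ 1 :=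
  div_le_one_of_le₀ ((Nat.cast_le.2 hk).trans nat_sqrt_le_real_sqrt) (sqrt_nonneg _)

theorem sq_div_sqrt_le_one_of_le_sqrt {m k : ℕ} (hk : k ≤ Nat.sqrt m) : ((k : ℝ) / √m) ^ 2 ≤ 1 :=
  pow_le_one₀ (by positivity) (div_sqrt_le_one_of_le_sqrt hk)

theorem mul_shellBound_term_le {m k : ℕ} (hm : 1 ≤ m) (hk : k ≤ Nat.sqrt m) :
    m * (π * ((k + 5) / √m) ^ 2 * (1 - (k / √m) ^ 2 / 16) ^ (m - 1)) ≤ 2 ^ 16 / (k + 1) ^ 2 := by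
  have hsq : √(m : ℝ) ^ 2 = m := sq_sqrt (Nat.cast_nonneg m)
  have hx : (k / √m : ℝ) ^ 2 / 16 ≤ 1 / 2 := by linarith [sq_div_sqrt_le_one_of_le_sqrt hk]
  have hdecay : (1 - (k / √m : ℝ) ^ 2 / 16) ^ (m - 1) ≤ 2 * (2 / (1 + (k : ℝ) ^ 2 / 16) ^ 2) := by
    refine (one_sub_pow_pred_le_two_mul_exp hx hm).trans ?_
    have hmx : (m : ℝ) * ((k / √m) ^ 2 / 16) = k ^ 2 / 16 := by
      rw [div_pow, hsq]; field_simp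
    rw [hmx]
    gcongr
    exact exp_neg_le_two_div_one_add_sq (by positivity)
  have harea : (m : ℝ) * ((k + 5) / √m) ^ 2 = (k + 5) ^ 2 := by
    rw [div_pow, hsq]; field_simp
  have hkey : ((k : ℝ) + 5) * (k + 1) ≤ 4 * (16 + k ^ 2) := by nlinarith [sq_nonneg ((k : ℝ) - 1)]
  calc m * (π * ((k + 5) / √m) ^ 2 * (1 - (k / √m) ^ 2 / 16) ^ (m - 1))
      = π * (k + 5) ^ 2 * (1 - (k / √m) ^ 2 / 16) ^ (m - 1) := by rw [← harea]; ring
    _ ≤ 4 * (k + 5) ^ 2 * (2 * (2 / (1 + (k : ℝ) ^ 2 / 16) ^ 2)) := by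
        have : 0 ≤ 1 - (k / √m : ℝ) ^ 2 / 16 := by linarith
        gcongr
        exact pi_le_four
    _ = 2 ^ 12 * ((k + 5) / (16 + k ^ 2)) ^ 2 := by field_simp; ring
    _ ≤ 2 ^ 12 * (4 / (k + 1)) ^ 2 := by
        have : ((k : ℝ) + 5) / (16 + k ^ 2) ≤ 4 / (k + 1) := by
          rw [div_le_div_iff₀ (by positivity) (by positivity)]
          linarith
        gcongr
    _ = 2 ^ 16 / (k + 1) ^ 2 := by rw [div_pow]; ring

theorem mul_one_sub_pow_pred_le {m : ℕ} (hm : 1 ≤ m) : m * (1 - 1 / 16 : ℝ) ^ (m - 1) ≤ 64 := by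
  have hdecay := (one_sub_pow_pred_le_two_mul_exp (by norm_num) hm).trans
    (mul_le_mul_of_nonneg_left (exp_neg_le_two_div_one_add_sq (y := m * (1 / 16))
      (by positivity)) zero_le_two)
  calc (m : ℝ) * (1 - 1 / 16) ^ (m - 1) ≤ m * (2 * (2 / (1 + m * (1 / 16)) ^ 2)) := by gcongr
    _ ≤ 64 := by
        rw [mul_div_assoc', mul_div_assoc', div_le_iff₀ (by positivity)]
        nlinarith [sq_nonneg ((m : ℝ) / 16)]

theorem mul_shellBound_le {m : ℕ} (hm : 1 ≤ m) : m * shellBound m ≤ 2 ^ 18 := by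
  rw [shellBound, mul_add, Finset.mul_sum]
  calc _ ≤ ∑ k ∈ Finset.range (Nat.sqrt m + 1), 2 ^ 16 * (1 / ((k : ℝ) + 1) ^ 2) + 64 := by
        refine add_le_add (Finset.sum_le_sum fun k hk => ?_) (mul_one_sub_pow_pred_le hm)
        rw [mul_one_div]
        exact mul_shellBound_term_le hm (Nat.lt_succ_iff.1 (Finset.mem_range.1 hk))
    _ ≤ 2 ^ 16 * 2 + 64 := by
        rw [← Finset.mul_sum]
        gcongr
        exact sum_range_inv_succ_sq_le _
    _ ≤ 2 ^ 18 := by norm_num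

theorem measure_le_shellBound {Ω : Type*} [MeasurableSpace Ω] {μ : Measure Ω}
    [IsProbabilityMeasure μ] {m : ℕ} {p : Fin m → Ω → EuclideanSpace ℝ (Fin 2)}
    (hp : ∀ i, Measurable (p i)) (hindep : iIndepFun p μ)
    (hlaw : ∀ i, μ.map (p i) = volume.restrict unitSquare) (i : Fin m)
    {c : EuclideanSpace ℝ (Fin 2)} (hc : c ∈ unitSquare) :
    μ {ω | ∀ j, dist (p i ω) c ≤ dist (p j ω) c + 4 / √m} ≤ ENNReal.ofReal (shellBound m) := by
  have hm : 0 < m := i.pos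
  have hsqrt : 0 < √(m : ℝ) := sqrt_pos.2 (by exact_mod_cast hm)
  have hK : 1 ≤ ((Nat.sqrt m + 1 : ℕ) : ℝ) * (1 / √m) := by
    rw [mul_one_div, le_div_iff₀ hsqrt, one_mul]; push_cast
    exact real_sqrt_lt_nat_sqrt_succ.le
  refine (measure_le_sum_shells hp hindep hlaw i c (r := 4 / √m) (one_div_pos.2 hsqrt) hK).trans ?_
  have hterm : ∀ k ∈ Finset.range (Nat.sqrt m + 1), 0 ≤ 1 - ((k : ℝ) / √m) ^ 2 / 16 :=
    fun k hk => by linarith [sq_div_sqrt_le_one_of_le_sqrt (Nat.lt_succ_iff.1 (Finset.mem_range.1 hk))]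
  rw [Fintype.card_fin, shellBound, ENNReal.ofReal_add (Finset.sum_nonneg fun k hk => by
    have := hterm k hk; positivity) (by norm_num), ENNReal.ofReal_sum_of_nonneg fun k hk => by
    have := hterm k hk; positivity]
  gcongr with k hk
  · rw [ENNReal.ofReal_mul (by positivity), ENNReal.ofReal_pow (hterm k hk)]
    gcongr
    · rw [show ((k : ℝ) + 1) * (1 / √m) + 4 / √m = (k + 5) / √m by ring]
      exact restrict_unitSquare_closedBall_le c (by positivity)
    · rw [mul_one_div]
      exact restrict_unitSquare_compl_ball_le hc (by positivity)
        (div_sqrt_le_one_of_le_sqrt (Nat.lt_succ_iff.1 (Finset.mem_range.1 hk)))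
  · rw [ENNReal.ofReal_pow (by norm_num)]
    gcongr
    simpa using restrict_unitSquare_compl_ball_le hc zero_le_one le_rfl

open Classical in
/-- There is a universal constant `C > 0` such that, for `m ≥ 1` i.i.d. uniform
points on the unit square, the expected number of sites whose (Euclidean) Voronoi
cell meets a fixed axis-parallel sub-square of side length `1/√m` is at most `C`. -/
theorem expected_cells_meeting_square :
    ∃ C : ℝ, 0 < C ∧
      ∀ (m : ℕ), 1 ≤ m →
      ∀ (Ω : Type) (_ : MeasurableSpace Ω) (μ : Measure Ω), IsProbabilityMeasure μ →
      ∀ (p : Fin m → Ω → EuclideanSpace ℝ (Fin 2)),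
        (∀ i, Measurable (p i)) →
        iIndepFun p μ →
        (∀ i, Measure.map (p i) μ = volume.restrict unitSquare) →
      ∀ c : EuclideanSpace ℝ (Fin 2),
        axisSquare c (1 / Real.sqrt m) ⊆ unitSquare →
        ∫⁻ ω, ((Finset.univ.filter (fun i : Fin m =>
            (vorCell (Finset.image (fun j => p j ω) Finset.univ) (p i ω) ∩
              axisSquare c (1 / Real.sqrt m)).Nonempty)).card : ℝ≥0∞) ∂μ
          ≤ ENNReal.ofReal C := by
  refine ⟨2 ^ 18, by norm_num, fun m hm Ω _ μ _ p hp hindep hlaw c hQ => ?_⟩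
  set E : Fin m → Set Ω := fun i => {ω | ∀ j, dist (p i ω) c ≤ dist (p j ω) c + 4 / Real.sqrt m}
  have hs : 0 ≤ 1 / Real.sqrt m := by positivity
  have hc : c ∈ unitSquare := hQ fun i => ⟨le_rfl, by linarith⟩
  have hE : ∀ i, MeasurableSet (E i) := fun i => by
    simp only [E, Set.ofPred_forall]
    exact .iInter fun j => measurableSet_le ((hp i).dist measurable_const)
      (((hp j).dist measurable_const).add_const _)
  have hcells : ∀ ω, Finset.univ.filter (fun i => (vorCell (Finset.image (fun j => p j ω)
      Finset.univ) (p i ω) ∩ axisSquare c (1 / Real.sqrt m)).Nonempty)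
      ⊆ Finset.univ.filter fun i => ω ∈ E i := fun ω =>
    Finset.monotone_filter_right _ fun i _ hi j =>
      (dist_le_dist_add_of_vorCell_inter_nonempty (axisSquare_subset_closedBall c hs) hi
        (Finset.mem_image_of_mem _ (Finset.mem_univ j))).trans_eq (by ring)
  calc _ ≤ ∫⁻ ω, ((Finset.univ.filter fun i => ω ∈ E i).card : ℝ≥0∞) ∂μ :=
        lintegral_mono fun ω => Nat.cast_le.2 (Finset.card_le_card (hcells ω))
    _ = ∑ i, μ (E i) := lintegral_card_filter_mem μ hE
    _ ≤ ∑ _i : Fin m, ENNReal.ofReal (shellBound m) :=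
        Finset.sum_le_sum fun i _ => measure_le_shellBound hp hindep hlaw i hc
    _ = ENNReal.ofReal (m * shellBound m) := by
        rw [Finset.sum_const, Finset.card_univ, Fintype.card_fin, nsmul_eq_mul,
          ENNReal.ofReal_mul (Nat.cast_nonneg _), ENNReal.ofReal_natCast]
    _ ≤ ENNReal.ofReal (2 ^ 18) := ENNReal.ofReal_le_ofReal (mul_shellBound_le hm)
end
end

section
/- Let A and B be finite families of (nondegenerate closed) line segments in ℝ². Suppose A is λ-low density and B is φ-low density, meaning: for every point x ∈ ℝ² and radius ρ > 0, the number of segments in the family that intersect the closed ball of radius ρ centered at x and have length at least ρ is less than λ (respectively φ). Then the number of pairs (u, v) ∈ A × B with u ∩ v ≠ ∅ is at most φ·|A| + λ·|B|. -/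
noncomputable section

open Classical in
/-- A finite family of segments in the plane (each given by its two endpoints) is
`lam`-low density if, for every point `x` and radius `ρ > 0`, fewer than `lam`
members of the family have length at least `ρ` and meet the closed ball of
radius `ρ` centered at `x`. -/
def LowDensity (A : Finset (EuclideanSpace ℝ (Fin 2) × EuclideanSpace ℝ (Fin 2)))
    (lam : ℕ) : Prop :=
  ∀ (x : EuclideanSpace ℝ (Fin 2)) (ρ : ℝ), 0 < ρ →
    (A.filter (fun u => ρ ≤ dist u.1 u.2 ∧
      (segment ℝ u.1 u.2 ∩ Metric.closedBall x ρ).Nonempty)).card < lam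


/-! Split the intersecting pairs `(u, v)` according to which of the two segments is shorter.
A segment that meets `u` and is at least as long as `u` meets the closed ball of radius `|u|`
around an endpoint of `u`, so by low density of `B` each `u ∈ A` is the shorter member of fewer
than `φ` pairs; symmetrically each `v ∈ B` is the strictly shorter member of fewer than `λ`. -/

open Finset

namespace Finset

variable {α β : Type*}

theorem card_filter_product_eq_sum_left (s : Finset α) (t : Finset β) (r : α → β → Prop)
    [∀ a b, Decidable (r a b)] :
    #{x ∈ s ×ˢ t | r x.1 x.2} = ∑ a ∈ s, #{b ∈ t | r a b} := by
  simp only [card_filter, sum_product]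

theorem card_filter_product_eq_sum_right (s : Finset α) (t : Finset β) (r : α → β → Prop)
    [∀ a b, Decidable (r a b)] :
    #{x ∈ s ×ˢ t | r x.1 x.2} = ∑ b ∈ t, #{a ∈ s | r a b} := by
  simp only [card_filter, sum_product_right]

theorem card_filter_product_le_add {s : Finset α} {t : Finset β} {r p : α → β → Prop}
    [∀ a b, Decidable (r a b)] [∀ a b, Decidable (p a b)] {m n : ℕ}
    (hs : ∀ a ∈ s, #{b ∈ t | r a b ∧ p a b} ≤ m)
    (ht : ∀ b ∈ t, #{a ∈ s | r a b ∧ ¬p a b} ≤ n) :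
    #{x ∈ s ×ˢ t | r x.1 x.2} ≤ m * #s + n * #t := by
  rw [← card_filter_add_card_filter_not (fun x => p x.1 x.2), filter_filter, filter_filter,
    card_filter_product_eq_sum_left s t (fun a b => r a b ∧ p a b),
    card_filter_product_eq_sum_right s t (fun a b => r a b ∧ ¬p a b)]
  gcongr
  · simpa [mul_comm] using sum_le_card_nsmul s _ m hs
  · simpa [mul_comm] using sum_le_card_nsmul t _ n ht

end Finset

open Classical in
theorem LowDensity.card_longer_meeting_lt
    {C : Finset (EuclideanSpace ℝ (Fin 2) × EuclideanSpace ℝ (Fin 2))} {k : ℕ}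
    (hC : LowDensity C k) {c : EuclideanSpace ℝ (Fin 2) × EuclideanSpace ℝ (Fin 2)}
    (hc : c.1 ≠ c.2) :
    #{v ∈ C | dist c.1 c.2 ≤ dist v.1 v.2 ∧ (segment ℝ v.1 v.2 ∩ segment ℝ c.1 c.2).Nonempty}
      < k := by
  refine (card_le_card <| monotone_filter_right _ ?_).trans_lt (hC c.1 _ (dist_pos.2 hc))
  rintro v - ⟨hlen, p, hpv, hpc⟩
  exact ⟨hlen, p, hpv, segment_subset_closedBall_left c.1 c.2 hpc⟩

open Classical in
/-- If `A` is a `λ`-low density family of (nondegenerate closed) segments and `B`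
is a `φ`-low density family of segments in the plane, then the number of
intersecting pairs `(u,v) ∈ A × B` is at most `φ·|A| + λ·|B|`. -/
theorem lowDensity_intersections
    (A B : Finset (EuclideanSpace ℝ (Fin 2) × EuclideanSpace ℝ (Fin 2)))
    (hA : ∀ u ∈ A, u.1 ≠ u.2) (hB : ∀ v ∈ B, v.1 ≠ v.2)
    (lam phi : ℕ) (hAld : LowDensity A lam) (hBld : LowDensity B phi) :
    ((A ×ˢ B).filter (fun uv =>
        (segment ℝ uv.1.1 uv.1.2 ∩ segment ℝ uv.2.1 uv.2.2).Nonempty)).card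
      ≤ phi * A.card + lam * B.card := by
  refine card_filter_product_le_add
    (r := fun u v : EuclideanSpace ℝ (Fin 2) × EuclideanSpace ℝ (Fin 2) =>
      (segment ℝ u.1 u.2 ∩ segment ℝ v.1 v.2).Nonempty)
    (p := fun u v => dist u.1 u.2 ≤ dist v.1 v.2)
    (fun u hu => ?_) (fun v hv => ?_)
  · refine (card_le_card <| monotone_filter_right _ ?_).trans
      (hBld.card_longer_meeting_lt (hA u hu)).le
    rintro v - ⟨hmeet, hlen⟩
    exact ⟨hlen, Set.inter_comm _ _ ▸ hmeet⟩
  · refine (card_le_card <| monotone_filter_right _ ?_).trans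
      (hAld.card_longer_meeting_lt (hB v hv)).le
    rintro u - ⟨hmeet, hlen⟩
    exact ⟨(not_le.1 hlen).le, hmeet⟩
end
end

section
/- Let m ≥ 3 be an integer. Let 𝕋² be the flat torus ℝ²/ℤ² with its quotient Euclidean metric, and let p₁, …, p_m be independent random points, each uniformly distributed on 𝕋². Let X be the distance from p₁ to the second closest point to it among p₂, …, p_m, and for each integer i ≥ 1 set rᵢ = √(1/(i·(m−1)·π)). Then for every integer i ≥ 4, the probability that X ∈ [r_{i+1}, r_i] is at most 1/i². -/
/-!
A closed ball of radius `r` in the torus lies in a product of two arcs of length `2r`, so it has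
measure at most `4r²`. If the second nearest neighbour of `p₁` is within distance `r`, then two
distinct points `p_j, p_k` lie in the ball of radius `r` around `p₁`; by independence this has
probability at most `(4r²)²` for each pair, and a union bound over the `C(m-1, 2) ≤ (m-1)²/2`
pairs gives at most `8(m-1)²r⁴`, which equals `8/(π²i²) < 1/i²` at `r = rᵢ`.
-/

open MeasureTheory ProbabilityTheory
open scoped ENNReal NNReal

noncomputable section

/-- The flat torus `ℝ²/ℤ²`, realized as the `ℓ²`-product of two copies of the
circle `ℝ/ℤ`; its metric is the quotient Euclidean metric
`d([x],[y]) = min_{v ∈ ℤ²} ‖x − y − v‖`. -/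
abbrev Torus : Type := WithLp 2 (AddCircle (1 : ℝ) × AddCircle (1 : ℝ))

instance : MeasurableSpace Torus := borel Torus
instance : BorelSpace Torus := ⟨rfl⟩

/-- The quotient projection `ℝ² → ℝ²/ℤ²`. -/
def proj (x : EuclideanSpace ℝ (Fin 2)) : Torus :=
  (WithLp.equiv 2 (AddCircle (1 : ℝ) × AddCircle (1 : ℝ))).symm
    ((x 0 : AddCircle (1 : ℝ)), (x 1 : AddCircle (1 : ℝ)))

/-- The uniform (normalized Haar/Lebesgue) probability measure on the flat torus,
obtained by pushing forward the uniform measure on the unit square. -/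
def torusUniform : Measure Torus := Measure.map proj (volume.restrict unitSquare)

/-- The distance from `x` to its second nearest point among the family `q`:
the second smallest value of a family is the minimum over all pairs of distinct
indices of the pairwise maxima. -/
def secondNearestDist {ι : Type*} (x : Torus) (q : ι → Torus) : ℝ :=
  sInf {t | ∃ j k : ι, j ≠ k ∧ t = max (dist x (q j)) (dist x (q k))}

open Set Metric Real

instance : Fact ((0 : ℝ) < 1) := ⟨one_pos⟩

lemma map_addCircle_mk_restrict_Icc {T : ℝ} [Fact (0 < T)] :
    (volume.restrict (Icc 0 T)).map ((↑) : ℝ → AddCircle T) = volume := by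
  have h := (AddCircle.measurePreserving_mk T 0).map_eq
  rwa [zero_add, Measure.restrict_congr_set Ioc_ae_eq_Icc] at h

lemma torusUniform_eq_map_toLp_prod :
    torusUniform =
      ((volume : Measure (AddCircle (1 : ℝ))).prod volume).map (WithLp.toLp 2) := by
  set e := (MeasurableEquiv.toLp 2 (Fin 2 → ℝ)).symm.trans MeasurableEquiv.finTwoArrow
  have he : MeasurePreserving e volume volume :=
    EuclideanSpace.volume_preserving_symm_measurableEquiv_toLp (Fin 2) |>.trans
      (volume_preserving_finTwoArrow ℝ)
  have hsquare : unitSquare = e ⁻¹' (Icc 0 1 ×ˢ Icc 0 1) := by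
    ext x; simp [unitSquare, e, Fin.forall_fin_two, and_and_and_comm]
  have hproj : proj = WithLp.toLp 2 ∘ Prod.map (↑) (↑) ∘ e := rfl
  have hmk : Measurable ((↑) : ℝ → AddCircle (1 : ℝ)) :=
    (AddCircle.continuous_mk' 1).measurable
  rw [torusUniform, hproj, hsquare,
    ← Measure.map_map (by fun_prop) ((hmk.prodMap hmk).comp e.measurable),
    ← Measure.map_map (hmk.prodMap hmk) e.measurable,
    (he.restrict_preimage (measurableSet_Icc.prod measurableSet_Icc)).map_eq,
    Measure.volume_eq_prod, ← Measure.prod_restrict, ← Measure.map_prod_map _ _ hmk hmk,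
    map_addCircle_mk_restrict_Icc]

lemma torusUniform_closedBall_le (x : Torus) (r : ℝ) :
    torusUniform (closedBall x r) ≤ ENNReal.ofReal (2 * r) ^ 2 := by
  have hsub : WithLp.toLp 2 ⁻¹' closedBall x r ⊆ closedBall x.fst r ×ˢ closedBall x.snd r :=
    fun y hy => ⟨(WithLp.dist_fst_le _ _).trans hy, (WithLp.dist_snd_le _ _).trans hy⟩
  calc torusUniform (closedBall x r)
      ≤ (volume.prod volume) (closedBall x.fst r ×ˢ closedBall x.snd r) := by
        rw [torusUniform_eq_map_toLp_prod,
          Measure.map_apply (by fun_prop) measurableSet_closedBall]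
        exact measure_mono hsub
    _ ≤ ENNReal.ofReal (2 * r) ^ 2 := by
        rw [Measure.prod_prod, AddCircle.volume_closedBall, AddCircle.volume_closedBall, sq]
        gcongr <;> exact min_le_right _ _

section PairBound

variable {Ω α ι : Type*} [MeasurableSpace Ω] {μ : Measure Ω} [IsProbabilityMeasure μ]
  [PseudoMetricSpace α] [MeasurableSpace α] [OpensMeasurableSpace α]
  [SecondCountableTopology α]
  {ν : Measure α} {p : ι → Ω → α}

lemma measure_dist_le_and_dist_le_le (hmeas : ∀ i, Measurable (p i)) (hindep : iIndepFun p μ)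
    (hlaw : ∀ i, μ.map (p i) = ν) {r : ℝ} {b : ℝ≥0∞}
    (hball : ∀ x, ν (closedBall x r) ≤ b) {z j k : ι} (hjz : j ≠ z) (hkz : k ≠ z)
    (hjk : j ≠ k) :
    μ {ω | dist (p z ω) (p j ω) ≤ r ∧ dist (p z ω) (p k ω) ≤ r} ≤ b ^ 2 := by
  have : IsProbabilityMeasure ν :=
    hlaw z ▸ Measure.isProbabilityMeasure_map (hmeas z).aemeasurable
  have hlaw_jk : μ.map (fun ω => (p j ω, p k ω)) = ν.prod ν := by
    rw [(indepFun_iff_map_prod_eq_prod_map_map (hmeas j).aemeasurable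
      (hmeas k).aemeasurable).mp (hindep.indepFun hjk), hlaw, hlaw]
  have hlaw_zjk : μ.map (fun ω => (p z ω, (p j ω, p k ω))) = ν.prod (ν.prod ν) := by
    rw [(indepFun_iff_map_prod_eq_prod_map_map (hmeas z).aemeasurable
      ((hmeas j).prodMk (hmeas k)).aemeasurable).mp
      (hindep.indepFun_prodMk hmeas j k z hjz hkz).symm, hlaw, hlaw_jk]
  set S : Set (α × α × α) := {q | dist q.1 q.2.1 ≤ r ∧ dist q.1 q.2.2 ≤ r}
  have hS : MeasurableSet S := by
    simp only [S, ofPred_and]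
    exact (measurableSet_le (by fun_prop) measurable_const).inter
      (measurableSet_le (by fun_prop) measurable_const)
  have hfiber (x : α) : Prod.mk x ⁻¹' S = closedBall x r ×ˢ closedBall x r := by
    ext y; simp [S, dist_comm x]
  calc μ {ω | dist (p z ω) (p j ω) ≤ r ∧ dist (p z ω) (p k ω) ≤ r}
      = ν.prod (ν.prod ν) S := by
        rw [← hlaw_zjk, Measure.map_apply (by fun_prop) hS]; rfl
    _ ≤ ∫⁻ _, b ^ 2 ∂ν := by
        rw [Measure.prod_apply hS]
        refine lintegral_mono fun x => ?_
        rw [hfiber, Measure.prod_prod, sq]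
        exact mul_le_mul' (hball x) (hball x)
    _ = b ^ 2 := by simp

end PairBound

lemma exists_card_eq_two_of_secondNearestDist_le {ι : Type*} [Finite ι] [Nontrivial ι]
    {x : Torus} {q : ι → Torus} {r : ℝ} (h : secondNearestDist x q ≤ r) :
    ∃ s : Finset ι, s.card = 2 ∧ ∀ j ∈ s, dist x (q j) ≤ r := by
  classical
  set S := {t | ∃ j k : ι, j ≠ k ∧ t = max (dist x (q j)) (dist x (q k))}
  have hS_finite : S.Finite :=
    (finite_range fun jk : ι × ι => max (dist x (q jk.1)) (dist x (q jk.2))).subset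
      fun _ ⟨j, k, _, ht⟩ => ⟨(j, k), ht.symm⟩
  have hS_nonempty : S.Nonempty :=
    let ⟨j, k, hjk⟩ := exists_pair_ne ι
    ⟨_, j, k, hjk, rfl⟩
  obtain ⟨j, k, hjk, ht⟩ := hS_nonempty.csInf_mem hS_finite
  have hmax : max (dist x (q j)) (dist x (q k)) ≤ r := ht ▸ h
  refine ⟨{j, k}, Finset.card_pair hjk, ?_⟩
  simp only [Finset.mem_insert, Finset.mem_singleton, forall_eq_or_imp, forall_eq]
  exact max_le_iff.mp hmax

lemma measure_secondNearestDist_le {Ω ι : Type*} [MeasurableSpace Ω] {μ : Measure Ω}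
    [IsProbabilityMeasure μ] [Fintype ι] {ν : Measure Torus} {p : ι → Ω → Torus}
    (hmeas : ∀ i, Measurable (p i)) (hindep : iIndepFun p μ) (hlaw : ∀ i, μ.map (p i) = ν)
    {r : ℝ} {b : ℝ≥0∞} (hball : ∀ x, ν (closedBall x r) ≤ b) (z : ι)
    (hcard : 2 < Fintype.card ι) :
    μ {ω | secondNearestDist (p z ω) (fun j : {j // j ≠ z} => p j.1 ω) ≤ r}
      ≤ (Fintype.card ι - 1).choose 2 * b ^ 2 := by
  classical
  have hcard_ne : Fintype.card {j // j ≠ z} = Fintype.card ι - 1 := by simp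
  have : Nontrivial {j // j ≠ z} := Fintype.one_lt_card_iff_nontrivial.mp (by omega)
  set A : Finset {j // j ≠ z} → Set Ω :=
    fun s => {ω | ∀ j ∈ s, dist (p z ω) (p j.1 ω) ≤ r}
  have hA (s) (hs : s ∈ Finset.powersetCard 2 Finset.univ) : μ (A s) ≤ b ^ 2 := by
    obtain ⟨j, k, hjk, rfl⟩ := Finset.card_eq_two.mp (Finset.mem_powersetCard.mp hs).2
    have hjk' : j.1 ≠ k.1 := fun h => hjk (Subtype.ext h)
    simpa only [A, Finset.mem_insert, Finset.mem_singleton, forall_eq_or_imp, forall_eq] using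
      measure_dist_le_and_dist_le_le hmeas hindep hlaw hball j.2 k.2 hjk'
  calc μ {ω | secondNearestDist (p z ω) (fun j : {j // j ≠ z} => p j.1 ω) ≤ r}
      ≤ μ (⋃ s ∈ Finset.powersetCard 2 Finset.univ, A s) := by
        refine measure_mono fun ω hω => ?_
        obtain ⟨s, hs, hdist⟩ := exists_card_eq_two_of_secondNearestDist_le hω
        exact mem_biUnion (Finset.mem_powersetCard.mpr ⟨Finset.subset_univ s, hs⟩) hdist
    _ ≤ ∑ s ∈ Finset.powersetCard 2 Finset.univ, μ (A s) := measure_biUnion_finset_le _ _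
    _ ≤ (Finset.powersetCard 2 Finset.univ).card • b ^ 2 := Finset.sum_le_card_nsmul _ _ _ hA
    _ = (Fintype.card ι - 1).choose 2 * b ^ 2 := by
        rw [Finset.card_powersetCard, Finset.card_univ, hcard_ne, nsmul_eq_mul]

lemma choose_two_mul_pow_four_le (n i : ℕ) :
    (n.choose 2 : ℝ) * (2 * √(1 / (i * n * π))) ^ 4 ≤ 1 / i ^ 2 := by
  rcases Nat.eq_zero_or_pos i with rfl | hi
  · simp
  rcases Nat.eq_zero_or_pos n with rfl | hn
  · simp
  have hu : (2 * √(1 / (i * n * π))) ^ 4 = 16 / (i * n * π) ^ 2 := by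
    rw [mul_pow, show 4 = 2 * 2 from rfl, pow_mul, pow_mul, Real.sq_sqrt (by positivity)]
    ring
  have hchoose : (n.choose 2 : ℝ) ≤ n ^ 2 / 2 := by
    rw [Nat.cast_choose_two]
    nlinarith [(Nat.cast_nonneg n : (0 : ℝ) ≤ n)]
  have hpi : 3 < π := Real.pi_gt_three
  calc (n.choose 2 : ℝ) * (2 * √(1 / (i * n * π))) ^ 4
      ≤ n ^ 2 / 2 * (16 / (i * n * π) ^ 2) := by rw [hu]; gcongr
    _ = 8 / π ^ 2 * (1 / i ^ 2) := by field_simp; ring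
    _ ≤ 1 * (1 / i ^ 2) := by
        gcongr
        rw [div_le_one (by positivity)]
        nlinarith
    _ = 1 / i ^ 2 := one_mul _

/-- For `m ≥ 3` i.i.d. uniform points on the flat torus, let `X` be the distance
from `p₁` to its second nearest point among `p₂, …, p_m`, and let
`rᵢ = √(1/(i(m−1)π))`.  Then for every `i ≥ 4`, the probability that
`X ∈ [r_{i+1}, r_i]` is at most `1/i²`. -/
theorem second_nearest_distance_bound
    (m : ℕ) (hm : 3 ≤ m)
    (Ω : Type*) [MeasurableSpace Ω] (μ : Measure Ω) [IsProbabilityMeasure μ]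
    (p : Fin m → Ω → Torus)
    (hmeas : ∀ i, Measurable (p i))
    (hindep : iIndepFun p μ)
    (hlaw : ∀ i, Measure.map (p i) μ = torusUniform)
    (i : ℕ) :
    μ {ω | secondNearestDist (p ⟨0, by omega⟩ ω)
            (fun j : {j : Fin m // j ≠ ⟨0, by omega⟩} => p j.1 ω) ∈
          Set.Icc (Real.sqrt (1 / ((i + 1) * (m - 1) * Real.pi)))
            (Real.sqrt (1 / (i * (m - 1) * Real.pi)))}
      ≤ ENNReal.ofReal (1 / i ^ 2) := by
  set r := √(1 / (i * (m - 1) * π))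
  have hm_cast : ((m - 1 : ℕ) : ℝ) = m - 1 := by rw [Nat.cast_sub (by omega), Nat.cast_one]
  calc _ ≤ μ {ω | secondNearestDist (p ⟨0, by omega⟩ ω)
          (fun j : {j : Fin m // j ≠ ⟨0, by omega⟩} => p j.1 ω) ≤ r} :=
        measure_mono fun _ hω => hω.2
    _ ≤ (m - 1).choose 2 * (ENNReal.ofReal (2 * r) ^ 2) ^ 2 := by
        simpa using measure_secondNearestDist_le hmeas hindep hlaw
          (torusUniform_closedBall_le · r) ⟨0, by omega⟩ (by simp; omega)
    _ = ENNReal.ofReal ((m - 1).choose 2 * (2 * r) ^ 4) := by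
        rw [ENNReal.ofReal_mul (Nat.cast_nonneg _), ENNReal.ofReal_natCast,
          ENNReal.ofReal_pow (by positivity)]
        ring
    _ ≤ ENNReal.ofReal (1 / i ^ 2) := by
        gcongr
        have h := choose_two_mul_pow_four_le (m - 1) i
        rwa [hm_cast] at h
end
end

section
/- Let P ⊆ ℝ² be a finite set with the Euclidean metric, let p₁ ∈ P, and let q ∈ P \ {p₁} be a point of P \ {p₁} nearest to p₁. Let ρ > 0 and suppose that every point of P \ {p₁, q} is at distance at least ρ from p₁ (i.e., the distance from p₁ to its second nearest neighbor in P \ {p₁} is at least ρ). Let t = p₁ + (ρ/4)·(p₁ − q)/‖p₁ − q‖. Then the closed ball of radius ρ/4 centered at t is contained in the Voronoi cell of p₁ with respect to P. -/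
open RealInnerProductSpace

/-- Let `q` be a nearest neighbor of `p₁` in `P \ {p₁}`, and suppose every other
point of `P \ {p₁, q}` is at distance at least `ρ > 0` from `p₁`.  Then the
closed ball of radius `ρ/4` centered at
`t = p₁ + (ρ/4)·(p₁ − q)/‖p₁ − q‖` is contained in the Voronoi cell of `p₁`. -/
theorem ball_in_vorCell
    (P : Finset (EuclideanSpace ℝ (Fin 2)))
    (p₁ q : EuclideanSpace ℝ (Fin 2))
    (hp₁ : p₁ ∈ P) (hqP : q ∈ P) (hq : q ≠ p₁)
    (hnear : ∀ z ∈ P, z ≠ p₁ → dist p₁ q ≤ dist p₁ z)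
    (ρ : ℝ) (hρ : 0 < ρ)
    (hsecond : ∀ z ∈ P, z ≠ p₁ → z ≠ q → ρ ≤ dist p₁ z) :
    Metric.closedBall (p₁ + (ρ / 4) • (‖p₁ - q‖⁻¹ • (p₁ - q))) (ρ / 4)
      ⊆ vorCell P p₁ := by
  intro x hx
  have hpq : p₁ - q ≠ 0 := sub_ne_zero.mpr hq.symm
  have hd0 : (0:ℝ) < ‖p₁ - q‖ := norm_pos_iff.mpr hpq
  set r := ρ / 4 with hr
  have hr0 : 0 < r := by positivity
  set t := p₁ + r • (‖p₁ - q‖⁻¹ • (p₁ - q)) with ht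
  have hxt : dist x t ≤ r := Metric.mem_closedBall.mp hx
  have htp : dist t p₁ = r := by
    rw [ht, dist_eq_norm, add_sub_cancel_left, norm_smul, norm_smul,
      Real.norm_eq_abs, Real.norm_eq_abs, abs_of_pos hr0,
      abs_of_pos (inv_pos.mpr hd0), inv_mul_cancel₀ hd0.ne', mul_one]
  have hxp : dist x p₁ ≤ ρ / 2 := by
    calc dist x p₁ ≤ dist x t + dist t p₁ := dist_triangle _ _ _
    _ ≤ r + r := add_le_add hxt htp.le
    _ = ρ / 2 := by rw [hr]; ring
  intro z hz
  by_cases hz1 : z = p₁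
  · simp [hz1]
  by_cases hz2 : z = q
  · rw [hz2]
    -- geometric case: bisector argument
    have hxn : ‖x - t‖ ≤ r := by rwa [dist_eq_norm] at hxt
    have hxp₁ : x - p₁ = (x - t) + r • (‖p₁ - q‖⁻¹ • (p₁ - q)) := by
      rw [ht]; abel
    have h1 : ⟪x - p₁, p₁ - q⟫ = ⟪x - t, p₁ - q⟫ + r * ‖p₁ - q‖ := by
      rw [hxp₁, inner_add_left, real_inner_smul_left, real_inner_smul_left,
        real_inner_self_eq_norm_sq]
      field_simp
    have h2 : -(r * ‖p₁ - q‖) ≤ ⟪x - t, p₁ - q⟫ := by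
      have hcs := abs_real_inner_le_norm (x - t) (p₁ - q)
      nlinarith [neg_abs_le (⟪x - t, p₁ - q⟫), hd0.le]
    have key : (0:ℝ) ≤ ⟪x - p₁, p₁ - q⟫ := by rw [h1]; linarith
    have hsplit : x - q = (x - p₁) + (p₁ - q) := by abel
    have hsq : ‖x - p₁‖ ^ 2 ≤ ‖x - q‖ ^ 2 := by
      rw [hsplit, norm_add_sq_real]
      nlinarith [sq_nonneg ‖p₁ - q‖]
    rw [dist_eq_norm, dist_eq_norm]
    nlinarith [norm_nonneg (x - p₁), norm_nonneg (x - q)]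
  · have h1 : ρ ≤ dist p₁ z := hsecond z hz hz1 hz2
    have h2 : dist p₁ z ≤ dist p₁ x + dist x z := dist_triangle _ _ _
    have h3 : dist p₁ x = dist x p₁ := dist_comm _ _
    linarith
end
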